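/- Fix q > 0. For X ≥ 4q and 0 ≤ d ≤ X - 4q, define V(d;X) = (1/(6q))·(2dX - 2d² + √(X-d)·(X-d-4q)^{3/2} - √X·(X-4q)^{3/2}). Then the third partial derivative of V with respect to d equals 4q²/((X-d)^{5/2}·(X-d-4q)^{3/2}), which is strictly positive whenever X - d > 4q; hence ∂V/∂d is strictly convex in d on [0, X-4q). -/

import Mathlib

/-!
With `u = X - d` and `c = 4q`, the only non-polynomial part of `V` is the profile
`√u (u - c)^{3/2}`, whose third derivative is `-3c³ / (8 u^{5/2} (u - c)^{3/2})`. Each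
differentiation step is an identity between expressions in `s = √u` and `t = √(u - c)`;
substituting `u = s²`, `c = s² - t²` turns it into an identity of rational functions. The third
derivative of `V` is therefore positive on `d < X - 4q`, so `∂V/∂d` has positive second
derivative there and is strictly convex.
-/

/-- The benefit `V(d;X)` of a discovery at distance `d` inside an area of length `X`, when the
farther sub-area still exceeds `4q`. -/
noncomputable def Vdeep (q X d : ℝ) : ℝ :=
  1 / (6 * q) * (2 * d * X - 2 * d ^ 2 + Real.sqrt (X - d) * (X - d - 4 * q) ^ ((3:ℝ)/2)
    - Real.sqrt X * (X - 4 * q) ^ ((3:ℝ)/2))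

open Filter Topology

theorem Real.rpow_natCast_add_half {x : ℝ} (hx : 0 ≤ x) (n : ℕ) :
    x ^ ((n : ℝ) + 1 / 2) = x ^ n * √x := by
  rw [Real.rpow_add' hx (by positivity), Real.rpow_natCast, Real.sqrt_eq_rpow]

theorem Real.rpow_three_halves {x : ℝ} (hx : 0 ≤ x) : x ^ ((3:ℝ)/2) = x * √x := by
  rw [show (3:ℝ)/2 = (1:ℕ) + 1/2 by norm_num, Real.rpow_natCast_add_half hx, pow_one]

theorem hasDerivAt_deriv_of_eventually_hasDerivAt {𝕜 F : Type*} [NontriviallyNormedField 𝕜]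
    [NormedAddCommGroup F] [NormedSpace 𝕜 F] {f f' : 𝕜 → F} {f'' : F} {x : 𝕜}
    (hf : ∀ᶠ y in 𝓝 x, HasDerivAt f (f' y) y) (hf' : HasDerivAt f' f'' x) :
    HasDerivAt (deriv f) f'' x :=
  hf'.congr_of_eventuallyEq (hf.mono fun _ hy ↦ hy.deriv)

namespace Vdeep

noncomputable def profile (c u : ℝ) : ℝ := √u * (u - c) ^ ((3:ℝ)/2)

noncomputable def profileDeriv (c u : ℝ) : ℝ := √(u - c) * (4 * u - c) / (2 * √u)

noncomputable def profileDeriv2 (c u : ℝ) : ℝ :=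
  (8 * u ^ 2 - 4 * c * u - c ^ 2) / (4 * u * √u * √(u - c))

noncomputable def profileDeriv3 (c u : ℝ) : ℝ :=
  -(3 * c ^ 3) / (8 * u ^ ((5:ℝ)/2) * (u - c) ^ ((3:ℝ)/2))

variable {c u : ℝ}

theorem hasDerivAt_profile (hu : 0 < u) (hcu : c < u) :
    HasDerivAt (profile c) (profileDeriv c u) u := by
  have hv : 0 < u - c := sub_pos.2 hcu
  have hs : 0 < √u := Real.sqrt_pos.2 hu
  have ht : 0 < √(u - c) := Real.sqrt_pos.2 hv
  refine (show HasDerivAt (profile c) _ u from ((hasDerivAt_id' u).sqrt hu.ne').mul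
    (((hasDerivAt_id' u).sub_const c).rpow_const (Or.inl hv.ne'))).congr_deriv ?_
  rw [profileDeriv, show (3:ℝ)/2 - 1 = 1/2 by norm_num, ← Real.sqrt_eq_rpow,
    Real.rpow_three_halves hv.le]
  have hs2 := Real.sq_sqrt hu.le
  have ht2 := Real.sq_sqrt hv.le
  generalize √u = s at *
  generalize √(u - c) = t at *
  subst hs2
  obtain rfl : c = s ^ 2 - t ^ 2 := by linarith
  field_simp
  ring

theorem hasDerivAt_profileDeriv (hu : 0 < u) (hcu : c < u) :
    HasDerivAt (profileDeriv c) (profileDeriv2 c u) u := by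
  have hv : 0 < u - c := sub_pos.2 hcu
  have hs : 0 < √u := Real.sqrt_pos.2 hu
  have ht : 0 < √(u - c) := Real.sqrt_pos.2 hv
  refine (show HasDerivAt (profileDeriv c) _ u from
    ((((hasDerivAt_id' u).sub_const c).sqrt hv.ne').mul
      (((hasDerivAt_id' u).const_mul 4).sub_const c)).div
    (((hasDerivAt_id' u).sqrt hu.ne').const_mul 2) (by positivity)).congr_deriv ?_
  rw [profileDeriv2]
  simp only [Pi.mul_apply]
  have hs2 := Real.sq_sqrt hu.le
  have ht2 := Real.sq_sqrt hv.le
  generalize √u = s at *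
  generalize √(u - c) = t at *
  subst hs2
  obtain rfl : c = s ^ 2 - t ^ 2 := by linarith
  field_simp
  ring

theorem hasDerivAt_profileDeriv2 (hu : 0 < u) (hcu : c < u) :
    HasDerivAt (profileDeriv2 c) (profileDeriv3 c u) u := by
  have hv : 0 < u - c := sub_pos.2 hcu
  have hs : 0 < √u := Real.sqrt_pos.2 hu
  have ht : 0 < √(u - c) := Real.sqrt_pos.2 hv
  refine (show HasDerivAt (profileDeriv2 c) _ u from
    ((((hasDerivAt_pow 2 u).const_mul 8).sub ((hasDerivAt_id' u).const_mul (4 * c))).sub_const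
      (c ^ 2)).div
    ((((hasDerivAt_id' u).const_mul 4).mul ((hasDerivAt_id' u).sqrt hu.ne')).mul
    (((hasDerivAt_id' u).sub_const c).sqrt hv.ne')) (by positivity)).congr_deriv ?_
  rw [profileDeriv3, show (5:ℝ)/2 = (2:ℕ) + 1/2 by norm_num, Real.rpow_natCast_add_half hu.le,
    Real.rpow_three_halves hv.le]
  simp only [Pi.mul_apply, Pi.sub_apply]
  have hs2 := Real.sq_sqrt hu.le
  have ht2 := Real.sq_sqrt hv.le
  generalize √u = s at *
  generalize √(u - c) = t at *
  subst hs2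
  obtain rfl : c = s ^ 2 - t ^ 2 := by linarith
  field_simp
  ring

noncomputable def firstDeriv (q X d : ℝ) : ℝ :=
  1 / (6 * q) * (2 * X - 4 * d - profileDeriv (4 * q) (X - d))

noncomputable def secondDeriv (q X d : ℝ) : ℝ :=
  1 / (6 * q) * (-4 + profileDeriv2 (4 * q) (X - d))

noncomputable def thirdDeriv (q X d : ℝ) : ℝ :=
  -(1 / (6 * q) * profileDeriv3 (4 * q) (X - d))

variable {q X d : ℝ}

theorem eq_profile (q X : ℝ) :
    Vdeep q X = fun d ↦ 1 / (6 * q) * (2 * d * X - 2 * d ^ 2 + profile (4 * q) (X - d)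
      - profile (4 * q) X) := rfl

theorem hasDerivAt_firstDeriv (hq : 0 ≤ q) (hd : d < X - 4 * q) :
    HasDerivAt (firstDeriv q X) (secondDeriv q X d) d := by
  have hprof :=
    (hasDerivAt_profileDeriv (c := 4 * q) (by linarith) (by linarith)).comp_const_sub X d
  have hlin : HasDerivAt (fun d ↦ 2 * X - 4 * d) (-4) d := by
    simpa using ((hasDerivAt_id' d).const_mul 4).const_sub (2 * X)
  refine ((hlin.sub hprof).const_mul _).congr_deriv ?_
  rw [secondDeriv]
  ring

theorem hasDerivAt_secondDeriv (hq : 0 ≤ q) (hd : d < X - 4 * q) :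
    HasDerivAt (secondDeriv q X) (thirdDeriv q X d) d := by
  have hprof :=
    (hasDerivAt_profileDeriv2 (c := 4 * q) (by linarith) (by linarith)).comp_const_sub X d
  refine ((hprof.const_add (-4)).const_mul _).congr_deriv ?_
  rw [thirdDeriv]
  ring

theorem thirdDeriv_eq_div_rpow (hq : q ≠ 0) (X d : ℝ) :
    thirdDeriv q X d = 4 * q ^ 2 / ((X - d) ^ ((5:ℝ)/2) * (X - d - 4 * q) ^ ((3:ℝ)/2)) := by
  rw [thirdDeriv, profileDeriv3]
  field_simp
  ring

end Vdeep

theorem hasDerivAt_Vdeep {q X d : ℝ} (hq : 0 ≤ q) (hd : d < X - 4 * q) :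
    HasDerivAt (Vdeep q X) (Vdeep.firstDeriv q X d) d := by
  have hpoly : HasDerivAt (fun d ↦ 2 * d * X - 2 * d ^ 2) (2 * X - 4 * d) d := by
    refine ((((hasDerivAt_id' d).const_mul 2).mul_const X).sub
      ((hasDerivAt_pow 2 d).const_mul 2)).congr_deriv ?_
    push_cast
    ring
  have hprof :=
    (Vdeep.hasDerivAt_profile (c := 4 * q) (by linarith) (by linarith)).comp_const_sub X d
  rw [Vdeep.eq_profile]
  refine (((hpoly.add hprof).sub_const _).const_mul _).congr_deriv ?_
  rw [Vdeep.firstDeriv]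
  ring

theorem hasDerivAt_deriv_Vdeep {q X d : ℝ} (hq : 0 ≤ q) (hd : d < X - 4 * q) :
    HasDerivAt (deriv (Vdeep q X)) (Vdeep.secondDeriv q X d) d :=
  hasDerivAt_deriv_of_eventually_hasDerivAt
    (eventually_of_mem (Iio_mem_nhds hd) fun _ hy ↦ hasDerivAt_Vdeep hq hy)
    (Vdeep.hasDerivAt_firstDeriv hq hd)

theorem hasDerivAt_deriv_deriv_Vdeep {q X d : ℝ} (hq : 0 ≤ q) (hd : d < X - 4 * q) :
    HasDerivAt (deriv (deriv (Vdeep q X))) (Vdeep.thirdDeriv q X d) d :=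
  hasDerivAt_deriv_of_eventually_hasDerivAt
    (eventually_of_mem (Iio_mem_nhds hd) fun _ hy ↦ hasDerivAt_deriv_Vdeep hq hy)
    (Vdeep.hasDerivAt_secondDeriv hq hd)

theorem Vdeep_third_deriv_general (q X : ℝ) (hq : 0 < q) :
    (∀ d : ℝ, 0 ≤ d → d < X - 4 * q →
      deriv (deriv (deriv (Vdeep q X))) d =
        4 * q ^ 2 / ((X - d) ^ ((5:ℝ)/2) * (X - d - 4 * q) ^ ((3:ℝ)/2)) ∧
      0 < 4 * q ^ 2 / ((X - d) ^ ((5:ℝ)/2) * (X - d - 4 * q) ^ ((3:ℝ)/2))) ∧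
    StrictConvexOn ℝ (Set.Ico 0 (X - 4 * q)) (deriv (Vdeep q X)) := by
  have hthird : ∀ d < X - 4 * q, deriv (deriv (deriv (Vdeep q X))) d =
      4 * q ^ 2 / ((X - d) ^ ((5:ℝ)/2) * (X - d - 4 * q) ^ ((3:ℝ)/2)) := fun d hd ↦
    (hasDerivAt_deriv_deriv_Vdeep hq.le hd).deriv.trans (Vdeep.thirdDeriv_eq_div_rpow hq.ne' X d)
  have hpos : ∀ d < X - 4 * q,
      0 < 4 * q ^ 2 / ((X - d) ^ ((5:ℝ)/2) * (X - d - 4 * q) ^ ((3:ℝ)/2)) := fun d hd ↦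
    div_pos (by positivity) (mul_pos (Real.rpow_pos_of_pos (by linarith) _)
      (Real.rpow_pos_of_pos (by linarith) _))
  refine ⟨fun d _ hd ↦ ⟨hthird d hd, hpos d hd⟩,
    strictConvexOn_of_deriv2_pos' (convex_Ico _ _) (fun d hd ↦ ?_) fun d hd ↦ ?_⟩
  · exact (hasDerivAt_deriv_Vdeep hq.le hd.2).continuousAt.continuousWithinAt
  · rw [Function.iterate_succ_apply', Function.iterate_one, hthird d hd.2]
    exact hpos d hd.2

/-- The third partial derivative of `V(·;X)` equals `4q²/((X-d)^{5/2}(X-d-4q)^{3/2}) > 0`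
for `0 ≤ d < X - 4q`; hence `∂V/∂d` is strictly convex in `d` on `[0, X-4q)`. -/
theorem Vdeep_third_deriv (q X : ℝ) (hq : 0 < q) (hX : 4 * q ≤ X) :
    (∀ d : ℝ, 0 ≤ d → d < X - 4 * q →
      deriv (deriv (deriv (Vdeep q X))) d =
        4 * q ^ 2 / ((X - d) ^ ((5:ℝ)/2) * (X - d - 4 * q) ^ ((3:ℝ)/2)) ∧
      0 < 4 * q ^ 2 / ((X - d) ^ ((5:ℝ)/2) * (X - d - 4 * q) ^ ((3:ℝ)/2))) ∧
    StrictConvexOn ℝ (Set.Ico 0 (X - 4 * q)) (deriv (Vdeep q X)) :=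
  Vdeep_third_deriv_general q X hq
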